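/- For every real α ≥ 1 one has κ₂⁰(α) = b₀^α and κ₂¹(α) = α b₀^{α−1} b₁, and for every integer n ≥ 1 the recurrence κ₂^{n+1}(α) = (1/(b₀(n+1))) · [ b₁(α−n) κ₂ⁿ(α) + b₂(2α−n+1) κ₂^{n−1}(α) ] holds. -/

import Mathlib

open Finset

/-- `b₀ = (3α−2)/(2α)`. -/
noncomputable def b0 (α : ℝ) : ℝ := (3 * α - 2) / (2 * α)

/-- `b₁ = −2(α−1)/α`. -/
noncomputable def b1 (α : ℝ) : ℝ := -(2 * (α - 1)) / α

/-- `b₂ = (α−2)/(2α)`. -/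
noncomputable def b2 (α : ℝ) : ℝ := (α - 2) / (2 * α)

/-- Generalized binomial coefficient `C(β,k) = β(β−1)⋯(β−k+1)/k!`. -/
noncomputable def genBinom (β : ℝ) (k : ℕ) : ℝ :=
  (∏ i ∈ Finset.range k, (β - i)) / (Nat.factorial k)

/-- `κ₂ⁿ(β) = (−1)ⁿ b₀^β Σ_{k=0}^{n} (b₂/b₀)^k C(β,k) C(β,n−k)`,
where `b₀, b₂` are formed from the fixed parameter `α`. -/
noncomputable def kappa2 (α β : ℝ) (n : ℕ) : ℝ :=
  (-1 : ℝ) ^ n * b0 α ^ β *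
    ∑ k ∈ Finset.range (n + 1), (b2 α / b0 α) ^ k * genBinom β k * genBinom β (n - k)

/-- Auxiliary sum. -/
noncomputable def Ssum (β r : ℝ) (n : ℕ) : ℝ :=
  ∑ k ∈ Finset.range (n + 1), r ^ k * genBinom β k * genBinom β (n - k)

lemma genBinom_succ (β : ℝ) (k : ℕ) :
    ((k : ℝ) + 1) * genBinom β (k + 1) = (β - k) * genBinom β k := by
  have hk : (Nat.factorial k : ℝ) ≠ 0 := Nat.cast_ne_zero.mpr (Nat.factorial_ne_zero k)
  have hk1 : ((k : ℝ) + 1) ≠ 0 := by positivity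
  simp only [genBinom, Finset.prod_range_succ, Nat.factorial_succ]
  push_cast
  field_simp

lemma aux1 (β r : ℝ) (M : ℕ) :
    (∑ k ∈ Finset.range (M + 1 + 1), (k : ℝ) * (r ^ k * genBinom β k * genBinom β (M + 1 - k)))
      = r * ∑ j ∈ Finset.range (M + 1),
          (β - (j : ℝ)) * (r ^ j * genBinom β j * genBinom β (M - j)) := by
  rw [Finset.sum_range_succ', Finset.mul_sum]
  simp only [Nat.cast_zero, zero_mul, add_zero]
  refine Finset.sum_congr rfl fun i hi => ?_
  have h1 : M + 1 - (i + 1) = M - i := by omega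
  rw [h1]
  push_cast
  linear_combination r ^ (i + 1) * genBinom β (M - i) * genBinom_succ β i

lemma aux2 (β r : ℝ) (M : ℕ) :
    (∑ k ∈ Finset.range (M + 1 + 1), ((M : ℝ) + 1 - k) * (r ^ k * genBinom β k * genBinom β (M + 1 - k)))
      = ∑ k ∈ Finset.range (M + 1),
          (β - ((M : ℝ) - k)) * (r ^ k * genBinom β k * genBinom β (M - k)) := by
  rw [Finset.sum_range_succ]
  have h0 : ((M : ℝ) + 1 - ((M + 1 : ℕ) : ℝ)) = 0 := by push_cast; ring
  rw [h0, zero_mul, add_zero]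
  refine Finset.sum_congr rfl fun k hk => ?_
  rw [Finset.mem_range] at hk
  have hk' : k ≤ M := by omega
  have h1 : M + 1 - k = (M - k) + 1 := by omega
  rw [h1]
  have h2 := genBinom_succ β (M - k)
  rw [Nat.cast_sub hk'] at h2
  linear_combination r ^ k * genBinom β k * h2

lemma Ssum_rec (β r : ℝ) (m : ℕ) :
    ((m : ℝ) + 2) * Ssum β r (m + 1 + 1) =
      (1 + r) * (β - ((m : ℝ) + 1)) * Ssum β r (m + 1) + r * (2 * β - (m : ℝ)) * Ssum β r m := by
  have hsplit : ((m : ℝ) + 2) * Ssum β r (m + 1 + 1)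
      = (∑ k ∈ Finset.range (m + 1 + 1 + 1),
          (k : ℝ) * (r ^ k * genBinom β k * genBinom β (m + 1 + 1 - k)))
        + ∑ k ∈ Finset.range (m + 1 + 1 + 1),
          ((m : ℝ) + 1 + 1 - k) * (r ^ k * genBinom β k * genBinom β (m + 1 + 1 - k)) := by
    rw [Ssum, Finset.mul_sum, ← Finset.sum_add_distrib]
    exact Finset.sum_congr rfl fun k _ => by ring
  have E1a := aux1 β r (m + 1)
  have E2a := aux2 β r (m + 1)
  push_cast at E2a
  have E1b := aux1 β r m
  have E2b := aux2 β r m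
  have h2 : (∑ j ∈ Finset.range (m + 1 + 1),
        (β - (j : ℝ)) * (r ^ j * genBinom β j * genBinom β (m + 1 - j)))
      = (β - ((m : ℝ) + 1)) * Ssum β r (m + 1)
        + ∑ j ∈ Finset.range (m + 1 + 1),
            ((m : ℝ) + 1 - j) * (r ^ j * genBinom β j * genBinom β (m + 1 - j)) := by
    rw [Ssum, Finset.mul_sum, ← Finset.sum_add_distrib]
    exact Finset.sum_congr rfl fun j _ => by ring
  have h3 : (∑ k ∈ Finset.range (m + 1 + 1),
        (β - ((m : ℝ) + 1 - k)) * (r ^ k * genBinom β k * genBinom β (m + 1 - k)))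
      = (β - ((m : ℝ) + 1)) * Ssum β r (m + 1)
        + ∑ k ∈ Finset.range (m + 1 + 1),
            (k : ℝ) * (r ^ k * genBinom β k * genBinom β (m + 1 - k)) := by
    rw [Ssum, Finset.mul_sum, ← Finset.sum_add_distrib]
    exact Finset.sum_congr rfl fun k _ => by ring
  have h5 : (∑ k ∈ Finset.range (m + 1),
        (β - ((m : ℝ) - k)) * (r ^ k * genBinom β k * genBinom β (m - k)))
      + (∑ j ∈ Finset.range (m + 1),
        (β - (j : ℝ)) * (r ^ j * genBinom β j * genBinom β (m - j)))
      = (2 * β - (m : ℝ)) * Ssum β r m := by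
    rw [Ssum, Finset.mul_sum, ← Finset.sum_add_distrib]
    exact Finset.sum_congr rfl fun k _ => by ring
  linear_combination hsplit + E1a + E2a + r * h2 + h3 + E1b + r * E2b + r * h5

/-- Initial values and three-term recurrence for the coefficients `κ₂ⁿ(α)`. -/
theorem kappa2_recurrence (α : ℝ) (hα : 1 ≤ α) :
    kappa2 α α 0 = b0 α ^ α ∧
    kappa2 α α 1 = α * b0 α ^ (α - 1) * b1 α ∧
    ∀ n : ℕ, 1 ≤ n →
      kappa2 α α (n + 1) = (1 / (b0 α * (n + 1))) *
        (b1 α * (α - n) * kappa2 α α n + b2 α * (2 * α - n + 1) * kappa2 α α (n - 1)) := by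
  have hα0 : (0 : ℝ) < α := lt_of_lt_of_le one_pos hα
  have hb0pos : 0 < b0 α := by
    have h1 : (0 : ℝ) < 3 * α - 2 := by linarith
    have h2 : (0 : ℝ) < 2 * α := by linarith
    exact div_pos h1 h2
  have hb0 : b0 α ≠ 0 := ne_of_gt hb0pos
  have hk2 : ∀ n, kappa2 α α n = (-1 : ℝ) ^ n * b0 α ^ α * Ssum α (b2 α / b0 α) n :=
    fun n => rfl
  have hr : b0 α * (b2 α / b0 α) = b2 α := mul_div_cancel₀ _ hb0
  have hb1 : b0 α + b2 α = -(b1 α) := by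
    unfold b0 b1 b2
    field_simp
    ring
  refine ⟨?_, ?_, ?_⟩
  · simp [kappa2, genBinom]
  · rw [hk2]
    have hS : Ssum α (b2 α / b0 α) 1 = α * (1 + b2 α / b0 α) := by
      simp [Ssum, Finset.sum_range_succ, genBinom]
      ring
    rw [hS]
    have hpow : b0 α ^ α = b0 α ^ (α - 1) * b0 α := by
      rw [← Real.rpow_add_one hb0]
      ring_nf
    rw [hpow]
    linear_combination (-(α * b0 α ^ (α - 1))) * hr - α * b0 α ^ (α - 1) * hb1
  · intro n hn
    obtain ⟨m, rfl⟩ : ∃ m, n = m + 1 := ⟨n - 1, by omega⟩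
    simp only [Nat.add_sub_cancel]
    rw [hk2, hk2, hk2]
    have key := Ssum_rec α (b2 α / b0 α) m
    set S2 := Ssum α (b2 α / b0 α) (m + 1 + 1) with hS2
    set S1 := Ssum α (b2 α / b0 α) (m + 1) with hS1
    set S0 := Ssum α (b2 α / b0 α) m with hS0
    have key2 : b0 α * (((m : ℝ) + 2) * S2)
        = (b0 α + b2 α) * (α - ((m : ℝ) + 1)) * S1 + b2 α * (2 * α - (m : ℝ)) * S0 := by
      linear_combination b0 α * key + ((α - ((m : ℝ) + 1)) * S1 + (2 * α - (m : ℝ)) * S0) * hr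
    have hD : b0 α * (((m + 1 : ℕ) : ℝ) + 1) ≠ 0 := by
      apply mul_ne_zero hb0
      positivity
    rw [one_div_mul_eq_div, eq_div_iff hD]
    push_cast
    linear_combination ((-1 : ℝ)) ^ m * b0 α ^ α * key2
      + ((-1 : ℝ)) ^ m * b0 α ^ α * (α - ((m : ℝ) + 1)) * S1 * hb1
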